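/- Let ω be an infinite word over a finite set S of integers, let t ≥ 1, and let μ be induced by a function f : ℤ → ℤᵗ extended additively to finite words. If ω has bounded μ-complexity, then for every k ≥ 1 some factor of ω is a k-power modulo μ, i.e., a concatenation B₁B₂⋯B_k of nonempty finite words with |B₁| = |B₂| = ⋯ = |B_k| and μ(B₁) = μ(B₂) = ⋯ = μ(B_k). -/

import Mathlib

/-!
Bounded μ-complexity gives a constant `C` such that, for each length `n`, the μ-values of the
factors of length `n` lie within `C` of each other coordinatewise: sliding a window one step
changes its μ-value by a bounded amount, and an integer walk with steps at most `s` through at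
most `M` values has range at most `s M`. Colour each `m : ℕ` by the μ-value of the prefix of
length `m` modulo `p = C + 1`. By the Gallai–Witt theorem some progression
`b, b + a, …, b + k a` is monochromatic, so the `k` consecutive blocks of length `a` starting
at `b` have μ-values `≡ 0 (mod p)`; being within `C < p` of each other, they coincide.
-/

/-- `B` is a factor of the infinite word `ω`. -/
def Factor (ω : ℕ → ℤ) (B : List ℤ) : Prop :=
  ∃ m : ℕ, B = (List.range B.length).map (fun i => ω (m + i))

/-- `ω` has bounded additive complexity: there is `M` such that for every `n ≥ 1`
the set of sums of factors of length `n` has at most `M` elements. -/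
def BoundedAddComplexity (ω : ℕ → ℤ) : Prop :=
  ∃ M : ℕ, ∀ n : ℕ, 1 ≤ n →
    ∃ T : Finset ℤ, T.card ≤ M ∧
      ∀ B : List ℤ, Factor ω B → B.length = n → B.sum ∈ T

/-- The slope of a finite word. -/
def wordSlope (B : List ℤ) : ℚ := (B.sum : ℚ) / (B.length : ℚ)

/-- `ω` has slope `L`. -/
def HasSlope (ω : ℕ → ℤ) (L : ℝ) : Prop :=
  Filter.Tendsto (fun n : ℕ => (∑ i ∈ Finset.range n, (ω i : ℝ)) / n)
    Filter.atTop (nhds L)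

/-- The value of the morphism induced by `f : ℤ → ℤᵗ` on a finite word. -/
def muSum (t : ℕ) (f : ℤ → (Fin t → ℤ)) (B : List ℤ) : Fin t → ℤ := (B.map f).sum

/-- ω has bounded μ-complexity for the morphism induced by f. -/
def BoundedMuComplexity (t : ℕ) (f : ℤ → (Fin t → ℤ)) (ω : ℕ → ℤ) : Prop :=
  ∃ M : ℕ, ∀ n : ℕ, 1 ≤ n →
    ∃ T : Finset (Fin t → ℤ), T.card ≤ M ∧
      ∀ B : List ℤ, Factor ω B → B.length = n → muSum t f B ∈ T

section Walk

variable {g : ℕ → ℤ} {s : ℤ}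

lemma exists_mem_Ioc_of_step_le (hstep : ∀ j, g (j + 1) ≤ g j + s) {a b : ℕ} (hab : a ≤ b)
    {x : ℤ} (ha : g a ≤ x + s) (hb : x < g b) : ∃ j, g j ∈ Set.Ioc x (x + s) := by
  induction b, hab using Nat.le_induction with
  | base => exact ⟨a, hb, ha⟩
  | succ n _ ih =>
    by_cases hn : x < g n
    · exact ih hn
    · exact ⟨n + 1, hb, by linarith [hstep n]⟩

/-- If `g m' - g m > s #T`, a walk with up-steps at most `s` meets each of the `#T + 1`
disjoint intervals `(g m + s (i - 1), g m + s i]`, `i ≤ #T`, on its way from `g m` to `g m'`. -/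
lemma sub_le_mul_card_of_step_le (hs : 0 ≤ s) (hstep : ∀ j, g (j + 1) ≤ g j + s)
    {T : Finset ℤ} (hT : ∀ j, g j ∈ T) {m m' : ℕ} (hm : m ≤ m') :
    g m' - g m ≤ s * T.card := by
  by_contra! hlt
  have hhit : ∀ i : ℕ, i ≤ T.card →
      ∃ v ∈ T, v ∈ Set.Ioc (g m + s * ((i : ℤ) - 1)) (g m + s * i) := by
    intro i hi
    have hi' : (i : ℤ) ≤ T.card := by exact_mod_cast hi
    obtain ⟨j, hj⟩ := exists_mem_Ioc_of_step_le hstep hm (x := g m + s * ((i : ℤ) - 1))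
      (by nlinarith) (by nlinarith)
    exact ⟨g j, hT j, hj.1, by linarith [hj.2]⟩
  choose! v hvT hv using hhit
  have hmono : StrictMonoOn v (Finset.range (T.card + 1)) := by
    intro i hi i' hi' hii'
    simp only [Finset.coe_range, Set.mem_Iio] at hi hi'
    have : (i : ℤ) ≤ i' - 1 := by omega
    calc v i ≤ g m + s * i := (hv i (by omega)).2
      _ ≤ g m + s * ((i' : ℤ) - 1) := by gcongr
      _ < v i' := (hv i' (by omega)).1
  have hcard := Finset.card_le_card_of_injOn v
    (fun i hi => hvT i (by simp only [Finset.coe_range, Set.mem_Iio] at hi; omega)) hmono.injOn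
  simp at hcard

lemma abs_sub_le_mul_card_of_abs_step_le (hstep : ∀ j, |g (j + 1) - g j| ≤ s)
    {T : Finset ℤ} (hT : ∀ j, g j ∈ T) (m m' : ℕ) : |g m' - g m| ≤ s * T.card := by
  wlog hm : m ≤ m' generalizing m m'
  · rw [abs_sub_comm]
    exact this m' m (by omega)
  have hs : 0 ≤ s := (abs_nonneg _).trans (hstep 0)
  have hup := sub_le_mul_card_of_step_le hs
    (fun j => by linarith [le_abs_self (g (j + 1) - g j), hstep j]) hT hm
  have hdown := sub_le_mul_card_of_step_le (g := fun j => -g j) hs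
    (fun j => by linarith [neg_abs_le (g (j + 1) - g j), hstep j])
    (fun j => Finset.mem_image_of_mem Neg.neg (hT j)) hm
  rw [Finset.card_image_of_injective _ neg_injective] at hdown
  exact abs_le.mpr ⟨by linarith, hup⟩

end Walk

section Words

variable (ω : ℕ → ℤ) (t : ℕ) (f : ℤ → (Fin t → ℤ))

def factorAt (m n : ℕ) : List ℤ := (List.range n).map fun i => ω (m + i)

lemma length_factorAt (m n : ℕ) : (factorAt ω m n).length = n := by simp [factorAt]

lemma factor_factorAt (m n : ℕ) : Factor ω (factorAt ω m n) := ⟨m, by simp [factorAt]⟩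

lemma factorAt_add (m n₁ n₂ : ℕ) :
    factorAt ω m (n₁ + n₂) = factorAt ω m n₁ ++ factorAt ω (m + n₁) n₂ := by
  simp only [factorAt, List.range_add, List.map_append, List.map_map]
  congr 2
  ext i
  simp [Nat.add_assoc]

lemma flatten_map_factorAt (m n k : ℕ) :
    ((List.range k).map fun j => factorAt ω (m + n * j) n).flatten = factorAt ω m (n * k) := by
  induction k with
  | zero => simp [factorAt]
  | succ k ih => simp [List.range_succ, ih, Nat.mul_succ, factorAt_add]

lemma muSum_append (B B' : List ℤ) : muSum t f (B ++ B') = muSum t f B + muSum t f B' := by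
  simp [muSum]

lemma muSum_factorAt_add (m n₁ n₂ : ℕ) :
    muSum t f (factorAt ω m (n₁ + n₂)) =
      muSum t f (factorAt ω m n₁) + muSum t f (factorAt ω (m + n₁) n₂) := by
  rw [factorAt_add, muSum_append]

lemma muSum_factorAt_one (m : ℕ) : muSum t f (factorAt ω m 1) = f (ω m) := by
  simp [muSum, factorAt]

lemma muSum_factorAt_succ_sub (m n : ℕ) :
    muSum t f (factorAt ω (m + 1) n) - muSum t f (factorAt ω m n) =
      f (ω (m + n)) - f (ω m) := by
  have h₁ := muSum_factorAt_add ω t f m n 1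
  have h₂ := muSum_factorAt_add ω t f m 1 n
  rw [muSum_factorAt_one] at h₁ h₂
  rw [Nat.add_comm 1 n] at h₂
  rw [sub_eq_sub_iff_add_eq_add, add_comm, ← h₂, h₁, add_comm]

lemma intCast_muSum_factorAt_eq_zero {p m n : ℕ} {c : Fin t}
    (h : ((muSum t f (factorAt ω 0 (m + n)) c : ℤ) : ZMod p) =
      (muSum t f (factorAt ω 0 m) c : ℤ)) :
    ((muSum t f (factorAt ω m n) c : ℤ) : ZMod p) = 0 := by
  simpa [muSum_factorAt_add] using h

end Words

lemma eq_of_intCast_eq_of_abs_sub_le {x y : ℤ} {C : ℕ} (h : (x : ZMod (C + 1)) = y)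
    (hxy : |x - y| ≤ C) : x = y := by
  have hdvd := (ZMod.intCast_eq_intCast_iff_dvd_sub x y (C + 1)).1 h
  have := Int.eq_zero_of_abs_lt_dvd hdvd (by rw [abs_sub_comm]; push_cast; omega)
  omega

lemma BoundedMuComplexity.exists_abs_muSum_factorAt_sub_le {S : Finset ℤ} {ω : ℕ → ℤ}
    (hω : ∀ i, ω i ∈ S) {t : ℕ} {f : ℤ → (Fin t → ℤ)}
    (hb : BoundedMuComplexity t f ω) :
    ∃ C : ℕ, ∀ n, 1 ≤ n → ∀ (c : Fin t) (m m' : ℕ),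
      |muSum t f (factorAt ω m' n) c - muSum t f (factorAt ω m n) c| ≤ C := by
  obtain ⟨M, hM⟩ := hb
  obtain ⟨B, hB⟩ : ∃ B : ℕ, ∀ i c, |f (ω i) c| ≤ B := by
    refine ⟨∑ z ∈ S, ∑ c, (f z c).natAbs, fun i c => ?_⟩
    rw [Int.abs_eq_natAbs, Nat.cast_le]
    exact (Finset.single_le_sum (fun _ _ => Nat.zero_le _) (Finset.mem_univ c)).trans
      (Finset.single_le_sum (f := fun z => ∑ c, (f z c).natAbs) (fun _ _ => Nat.zero_le _)
        (hω i))
  refine ⟨2 * B * M, fun n hn c m m' => ?_⟩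
  obtain ⟨T, hTcard, hT⟩ := hM n hn
  have hstep (j : ℕ) :
      |muSum t f (factorAt ω (j + 1) n) c - muSum t f (factorAt ω j n) c| ≤ 2 * B := by
    rw [← Pi.sub_apply, muSum_factorAt_succ_sub, Pi.sub_apply]
    linarith [abs_sub (f (ω (j + n)) c) (f (ω j) c), hB (j + n) c, hB j c]
  have hcard : ((T.image fun v => v c).card : ℤ) ≤ M := by
    exact_mod_cast Finset.card_image_le.trans hTcard
  push_cast
  calc _ ≤ 2 * (B : ℤ) * (T.image fun v => v c).card :=
        abs_sub_le_mul_card_of_abs_step_le (g := fun j => muSum t f (factorAt ω j n) c) hstep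
          (fun j => Finset.mem_image_of_mem _
            (hT _ (factor_factorAt ω j n) (length_factorAt ω j n))) m m'
    _ ≤ 2 * B * M := by gcongr

theorem stmt19_general (S : Finset ℤ) (ω : ℕ → ℤ) (hω : ∀ i : ℕ, ω i ∈ S)
    (t : ℕ) (f : ℤ → (Fin t → ℤ))
    (hb : BoundedMuComplexity t f ω) :
    ∀ k : ℕ, 1 ≤ k → ∃ W : List ℤ, Factor ω W ∧
      ∃ L : List (List ℤ), L.length = k ∧ W = L.flatten ∧
        ∃ l : ℕ, 1 ≤ l ∧ ∃ v : Fin t → ℤ,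
          ∀ Bi ∈ L, Bi.length = l ∧ muSum t f Bi = v := by
  intro k hk
  obtain ⟨C, hC⟩ := hb.exists_abs_muSum_factorAt_sub_le hω
  obtain ⟨a, ha, b, χ, hχ⟩ := Combinatorics.exists_mono_homothetic_copy (Finset.range (k + 1))
    fun m c => ((muSum t f (factorAt ω 0 m) c : ℤ) : ZMod (C + 1))
  have hzero : ∀ j < k, ∀ c,
      ((muSum t f (factorAt ω (b + a * j) a) c : ℤ) : ZMod (C + 1)) = 0 := by
    intro j hj c
    apply intCast_muSum_factorAt_eq_zero
    have h₀ := congrFun (hχ j (by simp; omega)) c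
    have h₁ := congrFun (hχ (j + 1) (by simp; omega)) c
    rw [smul_eq_mul] at h₀ h₁
    rw [show b + a * j + a = a * (j + 1) + b by ring, Nat.add_comm b]
    exact h₁.trans h₀.symm
  have hblock : ∀ j < k, muSum t f (factorAt ω (b + a * j) a) = muSum t f (factorAt ω b a) := by
    intro j hj
    funext c
    refine eq_of_intCast_eq_of_abs_sub_le ?_ (hC a ha c b (b + a * j))
    rw [hzero j hj c]
    simpa using (hzero 0 hk c).symm
  refine ⟨factorAt ω b (a * k), factor_factorAt ω b (a * k),
    (List.range k).map fun j => factorAt ω (b + a * j) a, by simp,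
    (flatten_map_factorAt ω b a k).symm, a, ha, muSum t f (factorAt ω b a), ?_⟩
  simp only [List.mem_map, List.mem_range, forall_exists_index, and_imp]
  rintro _ j hj rfl
  exact ⟨length_factorAt ω _ a, hblock j hj⟩

/-- If ω has bounded μ-complexity, then for every k ≥ 1 some factor of ω is a k-power
modulo μ: a concatenation of k nonempty blocks with equal lengths and equal μ-values. -/
theorem stmt19 (S : Finset ℤ) (ω : ℕ → ℤ) (hω : ∀ i : ℕ, ω i ∈ S)
    (t : ℕ) (ht : 1 ≤ t) (f : ℤ → (Fin t → ℤ))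
    (hb : BoundedMuComplexity t f ω) :
    ∀ k : ℕ, 1 ≤ k → ∃ W : List ℤ, Factor ω W ∧
      ∃ L : List (List ℤ), L.length = k ∧ W = L.flatten ∧
        ∃ l : ℕ, 1 ≤ l ∧ ∃ v : Fin t → ℤ,
          ∀ Bi ∈ L, Bi.length = l ∧ muSum t f Bi = v :=
  stmt19_general S ω hω t f hb
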